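/- Assume 1 ∉ I(a) ∪ I(b), with the A_i four distinct points of ℙ^1 with nonzero coordinates avoiding W. Then the union Z_{a,b}^A ⋆ L^A of the ab lines P_i^A ⋆ Q_j^A ⋆ L^A (i ∈ I(a), j ∈ I(b)) is a stick figure: the lines are pairwise distinct, any two meet in at most one point, and no point lies on three of the lines. Moreover, this configuration is the complete intersection of the two surfaces Π_{j∈I(b)} F_j = 0 and Π_{i∈I(a)} G_i = 0, where F_j and G_i are the respective linear forms Σ_t (α_t²β_t/((α_t+iβ_t)(jα_t+β_t))) x_t and Σ_t (α_tβ_t²/((α_t+iβ_t)(jα_t+β_t))) x_t suitably grouped so that the lines P_{i}^A ⋆ Q_{j}^A ⋆ L^A with fixed j (respectively fixed i) are coplanar. -/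

import Mathlib

/-!
Write a point of `P_i^A ⋆ Q_j^A ⋆ L^A` as `z = PQ ⋆ x` with `x ∈ L^A`. For the forms
`F_j = (α_t β_t / (j α_t + β_t))_t` and `G_i = (α_t β_t / (α_t + i β_t))_t` one has
`F_j · z = α · x + i β · x` and `G_i · z = j α · x + β · x`, so, as `ij ≠ 1`, the line is exactly
`{F_j = G_i = 0}`; this is the complete-intersection description.

Up to the rescaling `z ↦ (α_t β_t z_t)_t`, `F_j` and `G_i` are rows `((p α_t + q β_t)⁻¹)_t` of
Cauchy matrices, with nodes `(p, q) = (j, 1)` and `(1, i)`. A square Cauchy matrix with pairwise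
non-proportional nodes and points is nonsingular: clearing denominators in
`Σ_t w_t / (p α_t + q β_t)` gives a polynomial of degree `< 4` in `p / q` vanishing at four nodes,
and evaluating it at `-β_t / α_t` isolates `w_t`. Hence four distinct forms have no common zero and
three have a one-dimensional common kernel. Since `k` distinct pairs `(i, j)` involve at least
`k + 1` distinct indices when `k ≤ 3`, two of the lines meet in at most one point and three never
meet; as each line has two points, distinct pairs give distinct lines.
-/

/-- The point P_i^A ⋆ Q_j^A ∈ ℙ³ (affine representative). -/
noncomputable def PQvec (α β : Fin 4 → ℂ) (i j : ℕ) : Fin 4 → ℂ :=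
  fun t => ((α t + (i : ℂ) * β t) * ((j : ℂ) * α t + β t)) / (α t * β t)

/-- The cone over the line L^A: solutions of Σ α_t x_t = 0 = Σ β_t x_t. -/
def LAset (α β : Fin 4 → ℂ) : Set (Fin 4 → ℂ) :=
  {x | (∑ t, α t * x t) = 0 ∧ (∑ t, β t * x t) = 0}

/-- The line P_i^A ⋆ Q_j^A ⋆ L^A, as a subset of ℙ³. -/
def lineIJ (α β : Fin 4 → ℂ) (i j : ℕ) : Set (Projectivization ℂ (Fin 4 → ℂ)) :=
  {z | ∃ x ∈ LAset α β, ∃ h : (fun t => PQvec α β i j t * x t) ≠ 0,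
    z = Projectivization.mk ℂ (fun t => PQvec α β i j t * x t) h}

open Polynomial Finset

section Cauchy

variable {K ι κ : Type*} [Field K]

def cauchyForm (a b : ι → K) (ν : K × K) : ι → K := fun t => (ν.1 * a t + ν.2 * b t)⁻¹

lemma exists_forall_mul_add_ne_zero [Infinite K] [Finite κ] (x y : κ → K)
    (hxy : ∀ k, x k ≠ 0 ∨ y k ≠ 0) : ∃ c : K, ∀ k, c * x k + y k ≠ 0 := by
  classical
  have := Fintype.ofFinite κ
  obtain ⟨c, hc⟩ := Infinite.exists_notMem_finset (univ.image fun k => -y k / x k)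
  refine ⟨c, fun k h => ?_⟩
  rcases eq_or_ne (x k) 0 with hx | hx
  · exact (hxy k).resolve_left (not_not.2 hx) (by simpa [hx] using h)
  · exact hc (mem_image.2 ⟨k, mem_univ k, by rw [div_eq_iff hx]; linear_combination -h⟩)

-- `∏_t (a_t X + b_t) · Σ_t w_t / (a_t X + b_t)`, with the denominators cleared
noncomputable def cauchyNumerator [Fintype ι] [DecidableEq ι] (a b w : ι → K) : K[X] :=
  ∑ t, C (w t) * ∏ t' ∈ univ.erase t, (C (a t') * X + C (b t'))

lemma natDegree_cauchyNumerator_lt [Fintype ι] [DecidableEq ι] [Nonempty ι] (a b w : ι → K) :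
    (cauchyNumerator a b w).natDegree < Fintype.card ι := by
  have hle : (cauchyNumerator a b w).natDegree ≤ Fintype.card ι - 1 := by
    refine natDegree_sum_le_of_forall_le _ _ fun t _ => (natDegree_C_mul_le _ _).trans ?_
    calc (∏ t' ∈ univ.erase t, (C (a t') * X + C (b t'))).natDegree
        ≤ ∑ t' ∈ univ.erase t, (C (a t') * X + C (b t')).natDegree := natDegree_prod_le _ _
      _ ≤ ∑ _t' ∈ univ.erase t, 1 := by gcongr; exact natDegree_linear_le
      _ = Fintype.card ι - 1 := by simp [card_erase_of_mem]
  have := Fintype.card_pos (α := ι)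
  omega

lemma eval_cauchyNumerator [Fintype ι] [DecidableEq ι] (a b w : ι → K) (x : K) :
    (cauchyNumerator a b w).eval x = ∑ t, w t * ∏ t' ∈ univ.erase t, (a t' * x + b t') := by
  simp [cauchyNumerator, eval_finsetSum, eval_prod]

lemma sum_mul_prod_erase_eq [Fintype ι] [DecidableEq ι] (E w : ι → K) (hE : ∀ t, E t ≠ 0) :
    ∑ t, w t * ∏ t' ∈ univ.erase t, E t' = (∏ t, E t) * ∑ t, (E t)⁻¹ * w t := by
  rw [mul_sum]
  refine sum_congr rfl fun t _ => ?_
  rw [← mul_prod_erase univ E (mem_univ t)]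
  field_simp [hE t]

lemma eval_cauchyNumerator_div [Fintype ι] [DecidableEq ι] (a b w : ι → K) {p q : K}
    (hq : q ≠ 0) (hden : ∀ t, p * a t + q * b t ≠ 0) :
    (cauchyNumerator a b w).eval (p / q) =
      (∏ t, (a t * (p / q) + b t)) * q * (cauchyForm a b (p, q) ⬝ᵥ w) := by
  have hE : ∀ t, a t * (p / q) + b t = (p * a t + q * b t) / q := fun t => by
    field_simp
  rw [eval_cauchyNumerator, sum_mul_prod_erase_eq _ _ fun t => by
    rw [hE]; exact div_ne_zero (hden t) hq, mul_assoc]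
  simp only [cauchyForm, dotProduct, mul_sum]
  refine sum_congr rfl fun t _ => ?_
  rw [hE, inv_div]
  ring

lemma eval_cauchyNumerator_root [Fintype ι] [DecidableEq ι] (a b w : ι → K) (t : ι)
    (ha : a t ≠ 0) :
    (cauchyNumerator a b w).eval (-b t / a t) =
      w t * ∏ t' ∈ univ.erase t, (a t' * (-b t / a t) + b t') := by
  rw [eval_cauchyNumerator, sum_eq_single t (fun t₀ _ ht₀ => ?_) (by simp)]
  refine mul_eq_zero_of_right _ (prod_eq_zero (mem_erase.2 ⟨Ne.symm ht₀, mem_univ t⟩) ?_)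
  field_simp
  ring

theorem eq_zero_of_cauchyForm_dotProduct_eq_zero_of_ne_zero [Fintype ι] [Fintype κ]
    (a b : ι → K) (ν : κ → K × K) (hab : Pairwise fun t s => a t * b s ≠ a s * b t)
    (ha : ∀ t, a t ≠ 0)
    (hν : Pairwise fun s s' => (ν s).1 * (ν s').2 ≠ (ν s').1 * (ν s).2)
    (hq : ∀ s, (ν s).2 ≠ 0) (hden : ∀ s t, (ν s).1 * a t + (ν s).2 * b t ≠ 0)
    (hcard : Fintype.card ι ≤ Fintype.card κ) (w : ι → K)
    (hw : ∀ s, cauchyForm a b (ν s) ⬝ᵥ w = 0) : w = 0 := by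
  classical
  cases isEmpty_or_nonempty ι
  · exact Subsingleton.elim _ _
  have hN : cauchyNumerator a b w = 0 := by
    refine eq_zero_of_natDegree_lt_card_of_eval_eq_zero _ (f := fun s => (ν s).1 / (ν s).2)
      (fun s s' h => ?_) (fun s => ?_) ((natDegree_cauchyNumerator_lt a b w).trans_le hcard)
    · by_contra hne
      rw [div_eq_div_iff (hq s) (hq s')] at h
      exact hν hne h
    · rw [eval_cauchyNumerator_div a b w (hq s) (hden s), hw s, mul_zero]
  funext t
  have hroot := eval_cauchyNumerator_root a b w t (ha t)
  rw [hN, eval_zero, eq_comm] at hroot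
  refine (mul_eq_zero.1 hroot).resolve_right (prod_ne_zero_iff.2 fun t' ht' => ?_)
  have hE : a t' * (-b t / a t) + b t' = (a t * b t' - a t' * b t) / a t := by
    have := ha t
    field_simp
    ring
  rw [hE]
  exact div_ne_zero (sub_ne_zero.2 (hab (mem_erase.1 ht').1.symm)) (ha t)

lemma cauchyForm_shear (a b : ι → K) (ν : K × K) (c : K) :
    cauchyForm (fun t => a t - c * b t) b (ν.1, ν.2 + c * ν.1) = cauchyForm a b ν := by
  funext t
  simp only [cauchyForm]
  ring_nf

-- The shear `(p, q) ↦ (p, q + c p)`, `a ↦ a - c b` keeps every `p a + q b`; a generic `c` puts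
-- all nodes in the chart `q ≠ 0` and all points in the chart `a ≠ 0`.
theorem eq_zero_of_cauchyForm_dotProduct_eq_zero [Infinite K] [Fintype ι] [Fintype κ]
    (a b : ι → K) (ν : κ → K × K) (hab : Pairwise fun t s => a t * b s ≠ a s * b t)
    (hν : Pairwise fun s s' => (ν s).1 * (ν s').2 ≠ (ν s').1 * (ν s).2)
    (hden : ∀ s t, (ν s).1 * a t + (ν s).2 * b t ≠ 0)
    (hcard : Fintype.card ι ≤ Fintype.card κ) (w : ι → K)
    (hw : ∀ s, cauchyForm a b (ν s) ⬝ᵥ w = 0) : w = 0 := by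
  cases isEmpty_or_nonempty ι
  · exact Subsingleton.elim _ _
  obtain ⟨t₀⟩ := ‹Nonempty ι›
  obtain ⟨s₀⟩ : Nonempty κ := Fintype.card_pos_iff.1 (Fintype.card_pos.trans_le hcard)
  obtain ⟨c, hc⟩ := exists_forall_mul_add_ne_zero (Sum.elim (fun s => (ν s).1) (fun t => -b t))
    (Sum.elim (fun s => (ν s).2) a) <| by
      rintro (s | t) <;> by_contra! h <;>
        simp only [Sum.elim_inl, Sum.elim_inr, neg_eq_zero] at h
      · exact hden s t₀ (by simp [h.1, h.2])
      · exact hden s₀ t (by simp [h.1, h.2])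
  refine eq_zero_of_cauchyForm_dotProduct_eq_zero_of_ne_zero (fun t => a t - c * b t) b
    (fun s => ((ν s).1, (ν s).2 + c * (ν s).1)) (fun t s hts => ?_) (fun t h => ?_)
    (fun s s' hss' => ?_) (fun s h => ?_) (fun s t => ?_) hcard w (fun s => ?_)
  · exact fun h => hab hts (by linear_combination h)
  · exact hc (.inr t) (by simp only [Sum.elim_inr]; linear_combination h)
  · exact fun h => hν hss' (by linear_combination h)
  · exact hc (.inl s) (by simp only [Sum.elim_inl]; linear_combination h)
  · convert hden s t using 1; ring
  · rw [cauchyForm_shear]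
    exact hw s

lemma exists_fresh_node [Infinite K] [Finite ι] [Finite κ] (a b : ι → K) (ν : κ → K × K)
    (hpt : ∀ t, a t ≠ 0 ∨ b t ≠ 0) (hν : ∀ s, ν s ≠ 0) :
    ∃ c : K, (∀ s, (ν s).1 * 1 ≠ c * (ν s).2) ∧ ∀ t, c * a t + 1 * b t ≠ 0 := by
  obtain ⟨c, hc⟩ := exists_forall_mul_add_ne_zero (Sum.elim (fun s => (ν s).2) a)
    (Sum.elim (fun s => -(ν s).1) b) <| by
      rintro (s | t)
      · by_contra! h
        simp only [Sum.elim_inl, neg_eq_zero] at h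
        exact hν s (Prod.ext h.2 h.1)
      · exact hpt t
  refine ⟨c, fun s h => hc (.inl s) ?_, fun t => by simpa using hc (.inr t)⟩
  simp only [Sum.elim_inl]
  linear_combination -h

-- The form of a fresh node `(c, 1)` does not vanish on `w₁`, so a multiple of `w₁` agrees with
-- `w₂` on all the old nodes and on the new one.
theorem exists_eq_smul_of_cauchyForm_dotProduct_eq_zero [Infinite K] [Fintype ι] [Fintype κ]
    (a b : ι → K) (ν : κ → K × K) (hab : Pairwise fun t s => a t * b s ≠ a s * b t)
    (hpt : ∀ t, a t ≠ 0 ∨ b t ≠ 0)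
    (hν : Pairwise fun s s' => (ν s).1 * (ν s').2 ≠ (ν s').1 * (ν s).2)
    (hden : ∀ s t, (ν s).1 * a t + (ν s).2 * b t ≠ 0)
    (hcard : Fintype.card ι ≤ Fintype.card κ + 1) {w₁ w₂ : ι → K} (hw₁ : w₁ ≠ 0)
    (h₁ : ∀ s, cauchyForm a b (ν s) ⬝ᵥ w₁ = 0) (h₂ : ∀ s, cauchyForm a b (ν s) ⬝ᵥ w₂ = 0) :
    ∃ c : K, w₂ = c • w₁ := by
  obtain ⟨t₀⟩ : Nonempty ι := by
    by_contra! h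
    exact hw₁ (Subsingleton.elim _ _)
  obtain ⟨c, hcν, hca⟩ := exists_fresh_node a b ν hpt fun s h => hden s t₀ (by simp [h])
  let ν' : Option κ → K × K := fun o => o.elim (c, 1) ν
  have hν' : Pairwise fun s s' => (ν' s).1 * (ν' s').2 ≠ (ν' s').1 * (ν' s).2 := by
    rintro (_ | s) (_ | s') h
    exacts [absurd rfl h, (hcν s').symm, hcν s, hν fun e => h (congrArg some e)]
  have kernel : ∀ w, cauchyForm a b (c, 1) ⬝ᵥ w = 0 → (∀ s, cauchyForm a b (ν s) ⬝ᵥ w = 0) →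
      w = 0 := fun w h₀ h => by
    refine eq_zero_of_cauchyForm_dotProduct_eq_zero a b ν' hab hν' ?_ ?_ w ?_
    · rintro (_ | s) t
      exacts [hca t, hden s t]
    · simpa only [Fintype.card_option] using hcard
    · rintro (_ | s)
      exacts [h₀, h s]
  have hd : cauchyForm a b (c, 1) ⬝ᵥ w₁ ≠ 0 := fun h => hw₁ (kernel w₁ h h₁)
  refine ⟨(cauchyForm a b (c, 1) ⬝ᵥ w₂) / (cauchyForm a b (c, 1) ⬝ᵥ w₁),
    sub_eq_zero.1 (kernel _ ?_ fun s => ?_)⟩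
  · rw [dotProduct_sub, dotProduct_smul, smul_eq_mul, div_mul_cancel₀ _ hd, sub_self]
  · rw [dotProduct_sub, dotProduct_smul, h₁ s, h₂ s, smul_zero, sub_zero]

end Cauchy

section StickFigure

variable {α β : Fin 4 → ℂ}

noncomputable def formF (α β : Fin 4 → ℂ) (j : ℕ) : Fin 4 → ℂ :=
  α * β * cauchyForm α β ((j : ℂ), 1)

noncomputable def formG (α β : Fin 4 → ℂ) (i : ℕ) : Fin 4 → ℂ :=
  α * β * cauchyForm α β (1, (i : ℂ))

lemma mul_ne_one_of_left_ne_one {i : ℕ} (hi : i ≠ 1) (j : ℕ) : i * j ≠ 1 :=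
  fun h => hi (Nat.eq_one_of_mul_eq_one_right h)

lemma mul_dotProduct_eq_dotProduct_mul {R ι : Type*} [CommSemiring R] [Fintype ι] (x y v : ι → R) :
    (x * y) ⬝ᵥ v = y ⬝ᵥ (x * v) :=
  sum_congr rfl fun _ _ => by simp only [Pi.mul_apply]; ring

lemma nat_mul_add_ne_zero (hβ : ∀ t, β t ≠ 0)
    (hW : ∀ t, ∀ m : ℕ, 1 ≤ m → β t ≠ -(m : ℂ) * α t ∧ (m : ℂ) * β t ≠ -α t)
    (j : ℕ) (t : Fin 4) : (j : ℂ) * α t + 1 * β t ≠ 0 := by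
  rcases Nat.eq_zero_or_pos j with rfl | hj
  · simpa using hβ t
  · intro h
    exact (hW t j hj).1 (by linear_combination h)

lemma add_nat_mul_ne_zero (hα : ∀ t, α t ≠ 0)
    (hW : ∀ t, ∀ m : ℕ, 1 ≤ m → β t ≠ -(m : ℂ) * α t ∧ (m : ℂ) * β t ≠ -α t)
    (i : ℕ) (t : Fin 4) : 1 * α t + (i : ℂ) * β t ≠ 0 := by
  rcases Nat.eq_zero_or_pos i with rfl | hi
  · simpa using hα t
  · intro h
    exact (hW t i hi).2 (by linear_combination h)

lemma formF_ne_zero (hα : ∀ t, α t ≠ 0) (hβ : ∀ t, β t ≠ 0)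
    (hW : ∀ t, ∀ m : ℕ, 1 ≤ m → β t ≠ -(m : ℂ) * α t ∧ (m : ℂ) * β t ≠ -α t) (j : ℕ) :
    formF α β j ≠ 0 := fun h =>
  mul_ne_zero (mul_ne_zero (hα 0) (hβ 0)) (inv_ne_zero (nat_mul_add_ne_zero hβ hW j 0))
    (congrFun h 0)

lemma formG_ne_zero (hα : ∀ t, α t ≠ 0) (hβ : ∀ t, β t ≠ 0)
    (hW : ∀ t, ∀ m : ℕ, 1 ≤ m → β t ≠ -(m : ℂ) * α t ∧ (m : ℂ) * β t ≠ -α t) (i : ℕ) :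
    formG α β i ≠ 0 := fun h =>
  mul_ne_zero (mul_ne_zero (hα 0) (hβ 0)) (inv_ne_zero (add_nat_mul_ne_zero hα hW i 0))
    (congrFun h 0)

lemma PQvec_ne_zero (hα : ∀ t, α t ≠ 0) (hβ : ∀ t, β t ≠ 0)
    (hW : ∀ t, ∀ m : ℕ, 1 ≤ m → β t ≠ -(m : ℂ) * α t ∧ (m : ℂ) * β t ≠ -α t)
    (i j : ℕ) (t : Fin 4) : PQvec α β i j t ≠ 0 := by
  have hG := add_nat_mul_ne_zero hα hW i t
  have hF := nat_mul_add_ne_zero hβ hW j t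
  simp only [one_mul] at hG hF
  exact div_ne_zero (mul_ne_zero hG hF) (mul_ne_zero (hα t) (hβ t))

lemma formF_dotProduct_PQvec_mul (hα : ∀ t, α t ≠ 0) (hβ : ∀ t, β t ≠ 0)
    (hW : ∀ t, ∀ m : ℕ, 1 ≤ m → β t ≠ -(m : ℂ) * α t ∧ (m : ℂ) * β t ≠ -α t)
    (i j : ℕ) (x : Fin 4 → ℂ) :
    formF α β j ⬝ᵥ (PQvec α β i j * x) = α ⬝ᵥ x + i * (β ⬝ᵥ x) := by
  simp only [dotProduct, mul_sum, ← sum_add_distrib]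
  refine sum_congr rfl fun t _ => ?_
  have := hα t
  have := hβ t
  have : α t * j + β t ≠ 0 := by simpa [mul_comm] using nat_mul_add_ne_zero hβ hW j t
  simp only [formF, PQvec, cauchyForm, Pi.mul_apply, one_mul]
  field_simp

lemma formG_dotProduct_PQvec_mul (hα : ∀ t, α t ≠ 0) (hβ : ∀ t, β t ≠ 0)
    (hW : ∀ t, ∀ m : ℕ, 1 ≤ m → β t ≠ -(m : ℂ) * α t ∧ (m : ℂ) * β t ≠ -α t)
    (i j : ℕ) (x : Fin 4 → ℂ) :
    formG α β i ⬝ᵥ (PQvec α β i j * x) = j * (α ⬝ᵥ x) + β ⬝ᵥ x := by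
  simp only [dotProduct, mul_sum, ← sum_add_distrib]
  refine sum_congr rfl fun t _ => ?_
  have := hα t
  have := hβ t
  have : α t + β t * i ≠ 0 := by simpa [mul_comm] using add_nat_mul_ne_zero hα hW i t
  simp only [formG, PQvec, cauchyForm, Pi.mul_apply, one_mul]
  field_simp

theorem mem_lineIJ_iff (hα : ∀ t, α t ≠ 0) (hβ : ∀ t, β t ≠ 0)
    (hW : ∀ t, ∀ m : ℕ, 1 ≤ m → β t ≠ -(m : ℂ) * α t ∧ (m : ℂ) * β t ≠ -α t)
    {i j : ℕ} (hij : i * j ≠ 1) {v : Fin 4 → ℂ} (hv : v ≠ 0) :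
    Projectivization.mk ℂ v hv ∈ lineIJ α β i j ↔
      formF α β j ⬝ᵥ v = 0 ∧ formG α β i ⬝ᵥ v = 0 := by
  constructor
  · rintro ⟨x, ⟨hxα, hxβ⟩, hx, hmk⟩
    obtain ⟨c, rfl⟩ := (Projectivization.mk_eq_mk_iff' ℂ _ _ _ _).1 hmk
    have hv' : (fun t => PQvec α β i j t * x t) = PQvec α β i j * x := rfl
    rw [hv', dotProduct_smul, dotProduct_smul, formF_dotProduct_PQvec_mul hα hβ hW,
      formG_dotProduct_PQvec_mul hα hβ hW]
    exact ⟨by simp [dotProduct, hxα, hxβ], by simp [dotProduct, hxα, hxβ]⟩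
  · rintro ⟨hF, hG⟩
    set x := v / PQvec α β i j
    have hx : PQvec α β i j * x = v :=
      funext fun t => mul_div_cancel₀ _ (PQvec_ne_zero hα hβ hW i j t)
    rw [← hx, formF_dotProduct_PQvec_mul hα hβ hW] at hF
    rw [← hx, formG_dotProduct_PQvec_mul hα hβ hW] at hG
    have hdet : (1 : ℂ) - i * j ≠ 0 := by
      rw [sub_ne_zero, ne_comm]; exact_mod_cast hij
    refine ⟨x, ⟨?_, ?_⟩, show PQvec α β i j * x ≠ 0 from hx ▸ hv, by congr 1; exact hx.symm⟩
    · show α ⬝ᵥ x = 0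
      exact mul_left_cancel₀ hdet (by linear_combination hF - i * hG)
    · show β ⬝ᵥ x = 0
      exact mul_left_cancel₀ hdet (by linear_combination hG - j * hF)

lemma dotProduct_eq_zero_of_mem_lineIJ (hα : ∀ t, α t ≠ 0) (hβ : ∀ t, β t ≠ 0)
    (hW : ∀ t, ∀ m : ℕ, 1 ≤ m → β t ≠ -(m : ℂ) * α t ∧ (m : ℂ) * β t ≠ -α t)
    {i j : ℕ} (hij : i * j ≠ 1) {z : Projectivization ℂ (Fin 4 → ℂ)} (hz : z ∈ lineIJ α β i j)
    {v : Fin 4 → ℂ} (hv : v ≠ 0) (hvz : Projectivization.mk ℂ v hv = z) :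
    formF α β j ⬝ᵥ v = 0 ∧ formG α β i ⬝ᵥ v = 0 :=
  (mem_lineIJ_iff hα hβ hW hij hv).1 (hvz ▸ hz)

theorem lineIJ_nontrivial (hα : ∀ t, α t ≠ 0) (hβ : ∀ t, β t ≠ 0)
    (hdist : ∀ t s : Fin 4, t ≠ s → α t * β s ≠ α s * β t)
    (hW : ∀ t, ∀ m : ℕ, 1 ≤ m → β t ≠ -(m : ℂ) * α t ∧ (m : ℂ) * β t ≠ -α t) (i j : ℕ) :
    (lineIJ α β i j).Nontrivial := by
  have hPQ := PQvec_ne_zero hα hβ hW i j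
  have h12 : α 1 * β 2 - α 2 * β 1 ≠ 0 := sub_ne_zero.2 (hdist 1 2 (by decide))
  -- cross products of `α` and `β` restricted to the coordinates `{0, 1, 2}` and `{1, 2, 3}`
  set u : Fin 4 → ℂ :=
    ![α 1 * β 2 - α 2 * β 1, α 2 * β 0 - α 0 * β 2, α 0 * β 1 - α 1 * β 0, 0]
  set w : Fin 4 → ℂ :=
    ![0, α 2 * β 3 - α 3 * β 2, α 3 * β 1 - α 1 * β 3, α 1 * β 2 - α 2 * β 1]
  have hu : u ∈ LAset α β := by
    constructor <;> simp [u, Fin.sum_univ_four] <;> ring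
  have hw : w ∈ LAset α β := by
    constructor <;> simp [w, Fin.sum_univ_four] <;> ring
  have hu0 : PQvec α β i j * u ≠ 0 := fun h =>
    mul_ne_zero (hPQ 0) h12 (by simpa [u] using congrFun h 0)
  have hw0 : PQvec α β i j * w ≠ 0 := fun h =>
    mul_ne_zero (hPQ 3) h12 (by simpa [w] using congrFun h 3)
  refine ⟨_, ⟨u, hu, hu0, rfl⟩, _, ⟨w, hw, hw0, rfl⟩, fun h => ?_⟩
  obtain ⟨c, hc⟩ := (Projectivization.mk_eq_mk_iff' ℂ _ _ _ _).1 h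
  have := congrFun hc 3
  simp only [u, w, Pi.smul_apply, smul_eq_mul, Matrix.cons_val, mul_zero,
    mul_eq_zero] at this
  rcases this with rfl | h | h
  · exact hu0 (hc.symm.trans (zero_smul ℂ _))
  · exact hPQ 3 h
  · exact h12 h

lemma four_mul_card_le_sq_card_fst_add_snd {A B : Type*} [DecidableEq A] [DecidableEq B]
    (P : Finset (A × B)) :
    4 * #P ≤ (#(P.image Prod.fst) + #(P.image Prod.snd)) ^ 2 := by
  have h := (card_le_card (subset_product (s := P))).trans_eq (card_product _ _)
  zify at h ⊢
  nlinarith [sq_nonneg ((#(P.image Prod.fst) : ℤ) - #(P.image Prod.snd))]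

-- `inl i` is the node of `formG α β i`, `inr j` that of `formF α β j`
def stickNode (I J : Finset ℕ) : I ⊕ J → ℂ × ℂ :=
  Sum.elim (fun i => (1, (i : ℂ))) (fun j => ((j : ℂ), 1))

lemma stickNode_pairwise {I J : Finset ℕ} (hI : ∀ i ∈ I, i ≠ 1) :
    Pairwise fun s s' => (stickNode I J s).1 * (stickNode I J s').2 ≠
      (stickNode I J s').1 * (stickNode I J s).2 := by
  rintro (⟨i, hi⟩ | ⟨j, hj⟩) (⟨k, hk⟩ | ⟨l, hl⟩) h <;>
    simp only [stickNode, Sum.elim_inl, Sum.elim_inr, one_mul, mul_one, ne_eq] <;> norm_cast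
  · exact fun e => h (by simp [e])
  · exact fun e => mul_ne_one_of_left_ne_one (hI i hi) l (by rw [mul_comm]; exact e.symm)
  · exact fun e => mul_ne_one_of_left_ne_one (hI k hk) j (by rw [mul_comm]; exact e)
  · exact fun e => h (by simp [e])

lemma stickNode_mul_add_ne_zero (hα : ∀ t, α t ≠ 0) (hβ : ∀ t, β t ≠ 0)
    (hW : ∀ t, ∀ m : ℕ, 1 ≤ m → β t ≠ -(m : ℂ) * α t ∧ (m : ℂ) * β t ≠ -α t)
    (I J : Finset ℕ) (s : I ⊕ J) (t : Fin 4) :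
    (stickNode I J s).1 * α t + (stickNode I J s).2 * β t ≠ 0 := by
  rcases s with i | j
  · exact add_nat_mul_ne_zero hα hW i t
  · exact nat_mul_add_ne_zero hβ hW j t

lemma cauchyForm_stickNode_dotProduct_eq_zero (hα : ∀ t, α t ≠ 0) (hβ : ∀ t, β t ≠ 0)
    (hW : ∀ t, ∀ m : ℕ, 1 ≤ m → β t ≠ -(m : ℂ) * α t ∧ (m : ℂ) * β t ≠ -α t)
    {P : Finset (ℕ × ℕ)} (hP : ∀ p ∈ P, p.1 ≠ 1) {v : Fin 4 → ℂ} (hv : v ≠ 0)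
    (hmem : ∀ p ∈ P, Projectivization.mk ℂ v hv ∈ lineIJ α β p.1 p.2)
    (s : P.image Prod.fst ⊕ P.image Prod.snd) :
    cauchyForm α β (stickNode _ _ s) ⬝ᵥ (α * β * v) = 0 := by
  have hFG : ∀ p ∈ P, formF α β p.2 ⬝ᵥ v = 0 ∧ formG α β p.1 ⬝ᵥ v = 0 := fun p hp =>
    (mem_lineIJ_iff hα hβ hW (mul_ne_one_of_left_ne_one (hP p hp) _) hv).1 (hmem p hp)
  rcases s with ⟨i, hi⟩ | ⟨j, hj⟩
  · obtain ⟨p, hp, rfl⟩ := mem_image.1 hi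
    simpa [formG, mul_dotProduct_eq_dotProduct_mul, stickNode] using (hFG p hp).2
  · obtain ⟨p, hp, rfl⟩ := mem_image.1 hj
    simpa [formF, mul_dotProduct_eq_dotProduct_mul, stickNode] using (hFG p hp).1

lemma isUnit_mul_of_forall_ne_zero (hα : ∀ t, α t ≠ 0) (hβ : ∀ t, β t ≠ 0) :
    IsUnit (α * β) :=
  Pi.isUnit_iff.2 fun t => (mul_ne_zero (hα t) (hβ t)).isUnit

theorem eq_of_forall_mem_lineIJ (hα : ∀ t, α t ≠ 0) (hβ : ∀ t, β t ≠ 0)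
    (hdist : ∀ t s : Fin 4, t ≠ s → α t * β s ≠ α s * β t)
    (hW : ∀ t, ∀ m : ℕ, 1 ≤ m → β t ≠ -(m : ℂ) * α t ∧ (m : ℂ) * β t ≠ -α t)
    {P : Finset (ℕ × ℕ)} (hP1 : ∀ p ∈ P, p.1 ≠ 1) (hP : 2 ≤ #P)
    {z₁ z₂ : Projectivization ℂ (Fin 4 → ℂ)} (h₁ : ∀ p ∈ P, z₁ ∈ lineIJ α β p.1 p.2)
    (h₂ : ∀ p ∈ P, z₂ ∈ lineIJ α β p.1 p.2) : z₁ = z₂ := by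
  have hinj := (isUnit_mul_of_forall_ne_zero hα hβ).mul_right_injective
  have hcard := four_mul_card_le_sq_card_fst_add_snd P
  obtain ⟨c, hc⟩ := exists_eq_smul_of_cauchyForm_dotProduct_eq_zero α β (stickNode _ _)
    (fun t s h => hdist t s h) (fun t => .inl (hα t)) (stickNode_pairwise (by simpa using hP1))
    (stickNode_mul_add_ne_zero hα hβ hW _ _)
    (by simp only [Fintype.card_fin, Fintype.card_sum, Fintype.card_coe]; nlinarith)
    (fun h => z₁.rep_nonzero (hinj (h.trans (mul_zero _).symm)))
    (cauchyForm_stickNode_dotProduct_eq_zero hα hβ hW hP1 z₁.rep_nonzero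
      (by simpa only [Projectivization.mk_rep] using h₁))
    (cauchyForm_stickNode_dotProduct_eq_zero hα hβ hW hP1 z₂.rep_nonzero
      (by simpa only [Projectivization.mk_rep] using h₂))
  rw [← mul_smul_comm] at hc
  rw [← z₁.mk_rep, ← z₂.mk_rep, eq_comm, Projectivization.mk_eq_mk_iff']
  exact ⟨c, (hinj hc).symm⟩

theorem not_forall_mem_lineIJ (hα : ∀ t, α t ≠ 0) (hβ : ∀ t, β t ≠ 0)
    (hdist : ∀ t s : Fin 4, t ≠ s → α t * β s ≠ α s * β t)
    (hW : ∀ t, ∀ m : ℕ, 1 ≤ m → β t ≠ -(m : ℂ) * α t ∧ (m : ℂ) * β t ≠ -α t)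
    {P : Finset (ℕ × ℕ)} (hP1 : ∀ p ∈ P, p.1 ≠ 1) (hP : 3 ≤ #P)
    (z : Projectivization ℂ (Fin 4 → ℂ)) : ¬ ∀ p ∈ P, z ∈ lineIJ α β p.1 p.2 := by
  intro h
  have hcard := four_mul_card_le_sq_card_fst_add_snd P
  have hzero := eq_zero_of_cauchyForm_dotProduct_eq_zero α β (stickNode _ _)
    (fun t s h => hdist t s h) (stickNode_pairwise (by simpa using hP1))
    (stickNode_mul_add_ne_zero hα hβ hW _ _)
    (by simp only [Fintype.card_fin, Fintype.card_sum, Fintype.card_coe]; nlinarith) _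
    (cauchyForm_stickNode_dotProduct_eq_zero hα hβ hW hP1 z.rep_nonzero
      (by simpa only [Projectivization.mk_rep] using h))
  exact z.rep_nonzero
    ((isUnit_mul_of_forall_ne_zero hα hβ).mul_right_injective (hzero.trans (mul_zero _).symm))

theorem iUnion_lineIJ_eq (hα : ∀ t, α t ≠ 0) (hβ : ∀ t, β t ≠ 0)
    (hW : ∀ t, ∀ m : ℕ, 1 ≤ m → β t ≠ -(m : ℂ) * α t ∧ (m : ℂ) * β t ≠ -α t)
    {Ia Ib : Finset ℕ} (h1a : 1 ∉ Ia) :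
    (⋃ i ∈ Ia, ⋃ j ∈ Ib, lineIJ α β i j) =
      {z | ∀ (v : Fin 4 → ℂ) (hv : v ≠ 0), Projectivization.mk ℂ v hv = z →
        (∏ j ∈ Ib, formF α β j ⬝ᵥ v) = 0 ∧ (∏ i ∈ Ia, formG α β i ⬝ᵥ v) = 0} := by
  have hij : ∀ i ∈ Ia, ∀ j, i * j ≠ 1 := fun i hi =>
    mul_ne_one_of_left_ne_one fun h => h1a (h ▸ hi)
  ext z
  simp only [Set.mem_iUnion, Set.mem_ofPred_eq, prod_eq_zero_iff]
  constructor
  · rintro ⟨i, hi, j, hj, hz⟩ v hv hvz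
    obtain ⟨hF, hG⟩ := dotProduct_eq_zero_of_mem_lineIJ hα hβ hW (hij i hi j) hz hv hvz
    exact ⟨⟨j, hj, hF⟩, ⟨i, hi, hG⟩⟩
  · intro h
    obtain ⟨⟨j, hj, hF⟩, ⟨i, hi, hG⟩⟩ := h z.rep z.rep_nonzero z.mk_rep
    refine ⟨i, hi, j, hj, ?_⟩
    rw [← z.mk_rep]
    exact (mem_lineIJ_iff hα hβ hW (hij i hi j) _).2 ⟨hF, hG⟩

end StickFigure

theorem stick_figure_complete_intersection_general (α β : Fin 4 → ℂ)
    (hα : ∀ t, α t ≠ 0) (hβ : ∀ t, β t ≠ 0)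
    (hdist : ∀ t s : Fin 4, t ≠ s → α t * β s ≠ α s * β t)
    (hW : ∀ t, ∀ m : ℕ, 1 ≤ m → β t ≠ -(m : ℂ) * α t ∧ (m : ℂ) * β t ≠ -α t)
    (Ia Ib : Finset ℕ) (h1a : 1 ∉ Ia) :
    (∀ i ∈ Ia, ∀ k ∈ Ia, ∀ j ∈ Ib, ∀ l ∈ Ib, (i, j) ≠ (k, l) →
      lineIJ α β i j ≠ lineIJ α β k l) ∧
    (∀ i ∈ Ia, ∀ k ∈ Ia, ∀ j ∈ Ib, ∀ l ∈ Ib, (i, j) ≠ (k, l) →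
      (lineIJ α β i j ∩ lineIJ α β k l).Subsingleton) ∧
    (∀ i₁ ∈ Ia, ∀ i₂ ∈ Ia, ∀ i₃ ∈ Ia, ∀ j₁ ∈ Ib, ∀ j₂ ∈ Ib, ∀ j₃ ∈ Ib,
      (i₁, j₁) ≠ (i₂, j₂) → (i₁, j₁) ≠ (i₃, j₃) → (i₂, j₂) ≠ (i₃, j₃) →
      lineIJ α β i₁ j₁ ∩ lineIJ α β i₂ j₂ ∩ lineIJ α β i₃ j₃ = ∅) ∧
    (∃ F G : ℕ → (Fin 4 → ℂ),
      (∀ j ∈ Ib, F j ≠ 0) ∧ (∀ i ∈ Ia, G i ≠ 0) ∧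
      (∀ i ∈ Ia, ∀ j ∈ Ib, lineIJ α β i j ⊆
        {z | ∀ (v : Fin 4 → ℂ) (hv : v ≠ 0), Projectivization.mk ℂ v hv = z →
          ∑ t, F j t * v t = 0}) ∧
      (∀ i ∈ Ia, ∀ j ∈ Ib, lineIJ α β i j ⊆
        {z | ∀ (v : Fin 4 → ℂ) (hv : v ≠ 0), Projectivization.mk ℂ v hv = z →
          ∑ t, G i t * v t = 0}) ∧
      (⋃ i ∈ Ia, ⋃ j ∈ Ib, lineIJ α β i j) =
        {z | ∀ (v : Fin 4 → ℂ) (hv : v ≠ 0), Projectivization.mk ℂ v hv = z →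
          (∏ j ∈ Ib, ∑ t, F j t * v t) = 0 ∧ (∏ i ∈ Ia, ∑ t, G i t * v t) = 0}) := by
  have hP1 : ∀ i ∈ Ia, i ≠ 1 := fun i hi h => h1a (h ▸ hi)
  have meet : ∀ i ∈ Ia, ∀ k ∈ Ia, ∀ j ∈ Ib, ∀ l ∈ Ib, (i, j) ≠ (k, l) →
      (lineIJ α β i j ∩ lineIJ α β k l).Subsingleton := by
    rintro i hi k hk j - l - hne z₁ ⟨h₁, h₁'⟩ z₂ ⟨h₂, h₂'⟩
    refine eq_of_forall_mem_lineIJ hα hβ hdist hW (P := {(i, j), (k, l)}) ?_ (card_pair hne).ge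
      ?_ ?_ <;> simp only [mem_insert, mem_singleton, forall_eq_or_imp, forall_eq]
    exacts [⟨hP1 i hi, hP1 k hk⟩, ⟨h₁, h₁'⟩, ⟨h₂, h₂'⟩]
  refine ⟨fun i hi k hk j hj l hl hne heq => ?_, meet, ?_, formF α β, formG α β,
    fun j _ => formF_ne_zero hα hβ hW j, fun i _ => formG_ne_zero hα hβ hW i,
    fun i hi j _ z hz v hv hvz => (dotProduct_eq_zero_of_mem_lineIJ hα hβ hW
      (mul_ne_one_of_left_ne_one (hP1 i hi) j) hz hv hvz).1,
    fun i hi j _ z hz v hv hvz => (dotProduct_eq_zero_of_mem_lineIJ hα hβ hW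
      (mul_ne_one_of_left_ne_one (hP1 i hi) j) hz hv hvz).2,
    iUnion_lineIJ_eq hα hβ hW h1a⟩
  · exact (lineIJ_nontrivial hα hβ hdist hW i j).not_subsingleton
      (by simpa only [heq, Set.inter_self] using meet i hi k hk j hj l hl hne)
  · rintro i₁ hi₁ i₂ hi₂ i₃ hi₃ j₁ - j₂ - j₃ - h₁₂ h₁₃ h₂₃
    refine Set.eq_empty_of_forall_notMem fun z ⟨⟨hz₁, hz₂⟩, hz₃⟩ => not_forall_mem_lineIJ hα hβ
      hdist hW (P := {(i₁, j₁), (i₂, j₂), (i₃, j₃)}) ?_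
      (card_eq_three.2 ⟨_, _, _, h₁₂, h₁₃, h₂₃, rfl⟩).ge z ?_ <;>
      simp only [mem_insert, mem_singleton, forall_eq_or_imp, forall_eq]
    exacts [⟨hP1 i₁ hi₁, hP1 i₂ hi₂, hP1 i₃ hi₃⟩, ⟨hz₁, hz₂, hz₃⟩]

/-- assuming 1 ∉ I(a) ∪ I(b), Z_{a,b}^A ⋆ L^A is a stick figure of a·b
lines in ℙ³ (pairwise distinct lines, any two meeting in at most one point, no point
on three lines) and it is the complete intersection of the surfaces ∏ F_j = 0 and
∏ G_i = 0, where F_j cuts out the common plane of the lines with fixed j and G_i the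
common plane of the lines with fixed i. -/
theorem stick_figure_complete_intersection (α β : Fin 4 → ℂ)
    (hα : ∀ t, α t ≠ 0) (hβ : ∀ t, β t ≠ 0)
    (hdist : ∀ t s : Fin 4, t ≠ s → α t * β s ≠ α s * β t)
    (hW : ∀ t, ∀ m : ℕ, 1 ≤ m → β t ≠ -(m : ℂ) * α t ∧ (m : ℂ) * β t ≠ -α t)
    (a b : ℕ) (Ia Ib : Finset ℕ) (hIa : Ia.card = a) (hIb : Ib.card = b)
    (h0a : 0 ∈ Ia) (h0b : 0 ∈ Ib) (h1a : 1 ∉ Ia) (h1b : 1 ∉ Ib) :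
    (∀ i ∈ Ia, ∀ k ∈ Ia, ∀ j ∈ Ib, ∀ l ∈ Ib, (i, j) ≠ (k, l) →
      lineIJ α β i j ≠ lineIJ α β k l) ∧
    (∀ i ∈ Ia, ∀ k ∈ Ia, ∀ j ∈ Ib, ∀ l ∈ Ib, (i, j) ≠ (k, l) →
      (lineIJ α β i j ∩ lineIJ α β k l).Subsingleton) ∧
    (∀ i₁ ∈ Ia, ∀ i₂ ∈ Ia, ∀ i₃ ∈ Ia, ∀ j₁ ∈ Ib, ∀ j₂ ∈ Ib, ∀ j₃ ∈ Ib,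
      (i₁, j₁) ≠ (i₂, j₂) → (i₁, j₁) ≠ (i₃, j₃) → (i₂, j₂) ≠ (i₃, j₃) →
      lineIJ α β i₁ j₁ ∩ lineIJ α β i₂ j₂ ∩ lineIJ α β i₃ j₃ = ∅) ∧
    (∃ F G : ℕ → (Fin 4 → ℂ),
      (∀ j ∈ Ib, F j ≠ 0) ∧ (∀ i ∈ Ia, G i ≠ 0) ∧
      (∀ i ∈ Ia, ∀ j ∈ Ib, lineIJ α β i j ⊆
        {z | ∀ (v : Fin 4 → ℂ) (hv : v ≠ 0), Projectivization.mk ℂ v hv = z →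
          ∑ t, F j t * v t = 0}) ∧
      (∀ i ∈ Ia, ∀ j ∈ Ib, lineIJ α β i j ⊆
        {z | ∀ (v : Fin 4 → ℂ) (hv : v ≠ 0), Projectivization.mk ℂ v hv = z →
          ∑ t, G i t * v t = 0}) ∧
      (⋃ i ∈ Ia, ⋃ j ∈ Ib, lineIJ α β i j) =
        {z | ∀ (v : Fin 4 → ℂ) (hv : v ≠ 0), Projectivization.mk ℂ v hv = z →
          (∏ j ∈ Ib, ∑ t, F j t * v t) = 0 ∧ (∏ i ∈ Ia, ∑ t, G i t * v t) = 0}) :=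
  stick_figure_complete_intersection_general α β hα hβ hdist hW Ia Ib h1a
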